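/- (Canonical choice of generators.) For every n ≥ 3, the Σ_n-submodule of M_n generated by the single element l̂_n := 6·(n−1,n) − Σ_{(a,b)} (a,b), where the sum runs over all six ordered pairs (a,b) of distinct elements of {n−2,n−1,n}, equals the augmentation kernel Kr(n) = ker ε. -/

import Mathlib

/-!
The augmentation kernel of a permutation module is spanned by the differences of basis
vectors. Apart from its term `6·(n−1,n)`, the vector `l̂_n` is symmetric in the three points
`n−2, n−1, n`; so subtracting from `l̂_n` its images under two transpositions yields
`6·((n−1,n) − (n,n−1))` and `6·((n−1,n) − (n−2,n))`. Since `Σ_n` acts transitively on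
triples of distinct points, every difference `(i,j) − (j,i)` and `(i,j) − (k,j)` lies in the
`Σ_n`-span of `l̂_n`, and these moves connect any two ordered pairs.
-/

noncomputable section

/-- Ordered pairs of distinct elements of `{1,…,n}`. -/
abbrev Pn (n : ℕ) := {p : Fin n × Fin n // p.1 ≠ p.2}

/-- The vector space `M_n` of finitely supported real functions on `Pn n`. -/
abbrev Mn (n : ℕ) := Pn n →₀ ℝ

/-- The basis vector of `Mn n` corresponding to a pair `(i,j)`. -/
def bv {n : ℕ} (p : Pn n) : Mn n := Finsupp.single p 1

/-- The linear action of `π ∈ Σ_n` on `M_n`, `π • (i,j) = (π i, π j)`. -/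
def act {n : ℕ} (π : Equiv.Perm (Fin n)) : Mn n →ₗ[ℝ] Mn n :=
  Finsupp.lmapDomain ℝ ℝ fun p => ⟨(π p.1.1, π p.1.2), fun h => p.2 (π.injective h)⟩

/-- The augmentation `ε : M_n → ℝ` sending every basis vector to `1`. -/
def eps (n : ℕ) : Mn n →ₗ[ℝ] ℝ := Finsupp.lsum ℝ fun _ => LinearMap.id

/-- The element `n` of `{1,…,n}` (1-indexed). -/
def q1 {n : ℕ} (_h : 2 ≤ n) : Fin n := ⟨n - 1, by omega⟩
/-- The element `n-1` of `{1,…,n}` (1-indexed). -/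
def q2 {n : ℕ} (_h : 2 ≤ n) : Fin n := ⟨n - 2, by omega⟩
/-- The element `n-2` of `{1,…,n}` (1-indexed). -/
def q3 {n : ℕ} (_h : 3 ≤ n) : Fin n := ⟨n - 3, by omega⟩
/-- The element `n-3` of `{1,…,n}` (1-indexed). -/
def q4 {n : ℕ} (_h : 4 ≤ n) : Fin n := ⟨n - 4, by omega⟩

/-- `t̂_n := (n−1,n) − (n,n−1)`. -/
def tHat {n : ℕ} (h : 2 ≤ n) : Mn n :=
  bv ⟨(q2 h, q1 h), Fin.ne_of_val_ne (show n - 2 ≠ n - 1 by omega)⟩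
    - bv ⟨(q1 h, q2 h), Fin.ne_of_val_ne (show n - 1 ≠ n - 2 by omega)⟩

/-- `r̂_n := (n−2,n) − (n−1,n)`. -/
def rHat {n : ℕ} (h : 3 ≤ n) : Mn n :=
  bv ⟨(q3 h, q1 (by omega)), Fin.ne_of_val_ne (show n - 3 ≠ n - 1 by omega)⟩
    - bv ⟨(q2 (by omega), q1 (by omega)), Fin.ne_of_val_ne (show n - 2 ≠ n - 1 by omega)⟩

/-- `l̂_n := 6·(n−1,n) − Σ_{(a,b)} (a,b)`, the sum over all six ordered pairs of distinct
elements of `{n−2, n−1, n}`. -/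
def lHat {n : ℕ} (h : 3 ≤ n) : Mn n :=
  (6 : ℝ) • bv ⟨(q2 (by omega), q1 (by omega)),
      Fin.ne_of_val_ne (show n - 2 ≠ n - 1 by omega)⟩
    - (bv ⟨(q3 h, q2 (by omega)), Fin.ne_of_val_ne (show n - 3 ≠ n - 2 by omega)⟩
      + bv ⟨(q2 (by omega), q3 h), Fin.ne_of_val_ne (show n - 2 ≠ n - 3 by omega)⟩
      + bv ⟨(q3 h, q1 (by omega)), Fin.ne_of_val_ne (show n - 3 ≠ n - 1 by omega)⟩
      + bv ⟨(q1 (by omega), q3 h), Fin.ne_of_val_ne (show n - 1 ≠ n - 3 by omega)⟩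
      + bv ⟨(q2 (by omega), q1 (by omega)), Fin.ne_of_val_ne (show n - 2 ≠ n - 1 by omega)⟩
      + bv ⟨(q1 (by omega), q2 (by omega)), Fin.ne_of_val_ne (show n - 1 ≠ n - 2 by omega)⟩)

theorem Equiv.Perm.exists_apply_eq_of_ne {α : Type*} [DecidableEq α] {a b c i j k : α}
    (hab : a ≠ b) (hac : a ≠ c) (hbc : b ≠ c) (hij : i ≠ j) (hik : i ≠ k) (hjk : j ≠ k) :
    ∃ π : Equiv.Perm α, π a = i ∧ π b = j ∧ π c = k := by
  set σ := Equiv.swap (Equiv.swap a i b) j * Equiv.swap a i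
  have hσa : σ a = i := by
    have hne : Equiv.swap a i b ≠ i := by
      simpa using (Equiv.swap a i).injective.ne hab.symm
    simpa [σ] using Equiv.swap_apply_of_ne_of_ne hne.symm hij
  have hσb : σ b = j := by simp [σ]
  have hσc_i : σ c ≠ i := hσa ▸ σ.injective.ne hac.symm
  have hσc_j : σ c ≠ j := hσb ▸ σ.injective.ne hbc.symm
  refine ⟨Equiv.swap (σ c) k * σ, ?_, ?_, Equiv.swap_apply_left _ _⟩
  · simpa [hσa] using Equiv.swap_apply_of_ne_of_ne hσc_i.symm hik
  · simpa [hσb] using Equiv.swap_apply_of_ne_of_ne hσc_j.symm hjk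

theorem eq_of_symm_of_eq_left {α X : Type*} {g : α → α → X}
    (symm : ∀ i j, i ≠ j → g i j = g j i) (left : ∀ i k j, i ≠ j → k ≠ j → g i j = g k j)
    {i j k l : α} (hij : i ≠ j) (hkl : k ≠ l) : g i j = g k l := by
  by_cases hjl : j = l
  · subst hjl
    exact left i k j hij hkl
  · calc g i j = g l j := left i l j hij (Ne.symm hjl)
      _ = g j l := symm l j (Ne.symm hjl)
      _ = g k l := left j k l hjl hkl

theorem Finsupp.ker_lsum_id_le {ι R : Type*} [CommRing R] {W : Submodule R (ι →₀ R)}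
    (p₀ : ι) (hW : ∀ p, Finsupp.single p (1 : R) - Finsupp.single p₀ 1 ∈ W) :
    LinearMap.ker (Finsupp.lsum R fun _ : ι => (LinearMap.id : R →ₗ[R] R)) ≤ W := by
  set ε := Finsupp.lsum R fun _ : ι => (LinearMap.id : R →ₗ[R] R)
  have sub_smul_single_mem (x : ι →₀ R) : x - ε x • Finsupp.single p₀ 1 ∈ W := by
    induction x using Finsupp.induction_linear with
    | zero => simp
    | add x y hx hy =>
      convert W.add_mem hx hy using 1
      rw [map_add, add_smul]
      abel
    | single p r =>
      convert W.smul_mem r (hW p) using 1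
      simp [ε, smul_sub, Finsupp.smul_single]
  intro x hx
  simpa [LinearMap.mem_ker.mp hx] using sub_smul_single_mem x

namespace Christoffel

variable {n : ℕ}

/-- The basis vector `(i,j)`, extended by `0` to the diagonal `i = j`. -/
def pairVec (i j : Fin n) : Mn n :=
  if h : i ≠ j then bv ⟨(i, j), h⟩ else 0

theorem pairVec_of_ne {i j : Fin n} (h : i ≠ j) : pairVec i j = bv ⟨(i, j), h⟩ :=
  dif_pos h

theorem act_pairVec (π : Equiv.Perm (Fin n)) (i j : Fin n) :
    act π (pairVec i j) = pairVec (π i) (π j) := by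
  by_cases hij : i = j
  · simp [pairVec, hij]
  · rw [pairVec_of_ne hij, pairVec_of_ne (π.injective.ne hij)]
    simp [act, bv, Finsupp.lmapDomain]

theorem eps_pairVec {i j : Fin n} (h : i ≠ j) : eps n (pairVec i j) = 1 := by
  simp [pairVec_of_ne h, eps, bv]

def lVec (a b c : Fin n) : Mn n :=
  (6 : ℝ) • pairVec b a
    - (pairVec c b + pairVec b c + pairVec c a + pairVec a c + pairVec b a + pairVec a b)

theorem q_pairwise_ne (h : 3 ≤ n) :
    q1 (n := n) (by omega) ≠ q2 (by omega) ∧ q1 (n := n) (by omega) ≠ q3 h ∧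
      q2 (n := n) (by omega) ≠ q3 h := by
  simp only [q1, q2, q3, ne_eq, Fin.mk.injEq]
  omega

theorem lHat_eq_lVec (h : 3 ≤ n) : lHat h = lVec (q1 (by omega)) (q2 (by omega)) (q3 h) := by
  obtain ⟨h₁₂, h₁₃, h₂₃⟩ := q_pairwise_ne h
  rw [lVec, pairVec_of_ne h₁₂.symm, pairVec_of_ne h₂₃.symm, pairVec_of_ne h₂₃,
    pairVec_of_ne h₁₃.symm, pairVec_of_ne h₁₃, pairVec_of_ne h₁₂]
  rfl

theorem act_lVec (π : Equiv.Perm (Fin n)) (a b c : Fin n) :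
    act π (lVec a b c) = lVec (π a) (π b) (π c) := by
  simp only [lVec, map_sub, map_add, map_smul, act_pairVec]

theorem eps_lVec {a b c : Fin n} (hab : a ≠ b) (hac : a ≠ c) (hbc : b ≠ c) :
    eps n (lVec a b c) = 0 := by
  simp only [lVec, map_sub, map_add, map_smul, eps_pairVec hab, eps_pairVec hac,
    eps_pairVec hbc, eps_pairVec hab.symm, eps_pairVec hac.symm, eps_pairVec hbc.symm]
  norm_num

theorem lVec_sub_lVec_swap_left (a b c : Fin n) :
    lVec a b c - lVec b a c = (6 : ℝ) • (pairVec b a - pairVec a b) := by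
  simp only [lVec]
  module

theorem lVec_sub_lVec_swap_right (a b c : Fin n) :
    lVec a b c - lVec a c b = (6 : ℝ) • (pairVec b a - pairVec c a) := by
  simp only [lVec]
  module

def orbitSpan (v : Mn n) : Submodule ℝ (Mn n) :=
  Submodule.span ℝ {x | ∃ π : Equiv.Perm (Fin n), x = act π v}

variable (h : 3 ≤ n)

theorem lVec_mem_orbitSpan {a b c : Fin n} (hab : a ≠ b) (hac : a ≠ c) (hbc : b ≠ c) :
    lVec a b c ∈ orbitSpan (lHat h) := by
  obtain ⟨h₁₂, h₁₃, h₂₃⟩ := q_pairwise_ne h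
  obtain ⟨π, rfl, rfl, rfl⟩ := Equiv.Perm.exists_apply_eq_of_ne h₁₂ h₁₃ h₂₃ hab hac hbc
  exact Submodule.subset_span ⟨π, by rw [lHat_eq_lVec h, act_lVec]⟩

theorem pairVec_sub_pairVec_swap_mem {i j : Fin n} (hij : i ≠ j) :
    pairVec i j - pairVec j i ∈ orbitSpan (lHat h) := by
  obtain ⟨k, -, hk⟩ := Finset.exists_mem_notMem_of_card_lt_card
    (s := {i, j}) (t := Finset.univ)
    (Finset.card_le_two.trans_lt (by rw [Finset.card_univ, Fintype.card_fin]; omega))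
  simp only [Finset.mem_insert, Finset.mem_singleton, not_or] at hk
  rw [← Submodule.smul_mem_iff _ (by norm_num : (6 : ℝ) ≠ 0), ← lVec_sub_lVec_swap_left]
  exact Submodule.sub_mem _ (lVec_mem_orbitSpan h (Ne.symm hij) (Ne.symm hk.2) (Ne.symm hk.1))
    (lVec_mem_orbitSpan h hij (Ne.symm hk.1) (Ne.symm hk.2))

theorem pairVec_sub_pairVec_left_mem {i j k : Fin n} (hij : i ≠ j) (hkj : k ≠ j) :
    pairVec i j - pairVec k j ∈ orbitSpan (lHat h) := by
  by_cases hik : i = k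
  · simp [hik]
  rw [← Submodule.smul_mem_iff _ (by norm_num : (6 : ℝ) ≠ 0), ← lVec_sub_lVec_swap_right]
  exact Submodule.sub_mem _ (lVec_mem_orbitSpan h (Ne.symm hij) (Ne.symm hkj) hik)
    (lVec_mem_orbitSpan h (Ne.symm hkj) (Ne.symm hij) (Ne.symm hik))

theorem bv_sub_bv_mem (p q : Pn n) : bv p - bv q ∈ orbitSpan (lHat h) := by
  obtain ⟨⟨i, j⟩, hij⟩ := p
  obtain ⟨⟨k, l⟩, hkl⟩ := q
  rw [← pairVec_of_ne hij, ← pairVec_of_ne hkl, ← Submodule.Quotient.eq]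
  refine eq_of_symm_of_eq_left (g := fun i j => Submodule.Quotient.mk (pairVec i j))
    (fun i j hij => ?_) (fun i k j hij hkj => ?_) hij hkl
  · exact (Submodule.Quotient.eq _).mpr (pairVec_sub_pairVec_swap_mem h hij)
  · exact (Submodule.Quotient.eq _).mpr (pairVec_sub_pairVec_left_mem h hij hkj)

theorem orbitSpan_lHat_le_ker : orbitSpan (lHat h) ≤ LinearMap.ker (eps n) := by
  rw [orbitSpan, Submodule.span_le]
  rintro _ ⟨π, rfl⟩
  obtain ⟨h₁₂, h₁₃, h₂₃⟩ := q_pairwise_ne h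
  rw [SetLike.mem_coe, LinearMap.mem_ker, lHat_eq_lVec h, act_lVec]
  exact eps_lVec (π.injective.ne h₁₂) (π.injective.ne h₁₃) (π.injective.ne h₂₃)

end Christoffel

open Christoffel

/-- canonical choice of generators: for every `n ≥ 3` the `Σ_n`-submodule of
`M_n` generated by the single element `l̂_n` equals `Kr(n) = ker ε`. -/
theorem statement5 :
    ∀ n : ℕ, ∀ h : 3 ≤ n,
      Submodule.span ℝ
          {x : Mn n | ∃ π : Equiv.Perm (Fin n), x = act π (lHat h)}
        = LinearMap.ker (eps n) := by
  intro n h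
  exact le_antisymm (orbitSpan_lHat_le_ker h) <|
    Finsupp.ker_lsum_id_le ⟨(q1 (by omega), q2 (by omega)), (q_pairwise_ne h).1⟩
      (bv_sub_bv_mem h · _)
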